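/- Let Q be a finite quiver without sources. Then the projective Leavitt complex P• of Q is an acyclic complex, i.e., Ker δ^{l+1} = Im δ^l for all integers l. -/

import Mathlib

noncomputable section

/-- A finite quiver: finite sets of vertices and arrows, with source and target maps. -/
structure FQ where
  V : Type
  E : Type
  [fV : Fintype V]
  [fE : Fintype E]
  [dV : DecidableEq V]
  [dE : DecidableEq E]
  s : E → V
  t : E → V

attribute [instance] FQ.fV FQ.fE FQ.dV FQ.dE

/-- `Q` has no sources: every vertex admits an arrow terminating at it. -/
def FQ.NoSources (Q : FQ) : Prop := ∀ i : Q.V, ∃ e : Q.E, Q.t e = i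

/-- The opposite quiver. -/
def FQ.op (Q : FQ) : FQ := { V := Q.V, E := Q.E, s := Q.t, t := Q.s }

/-- Paths in the quiver `Q` from a vertex to a vertex; `cons p e he` is the path
`e ∘ p` obtained by composing an arrow `e` after the path `p` (paths are written
from right to left). -/
inductive QP (Q : FQ) : Q.V → Q.V → Type
  | nil (i : Q.V) : QP Q i i
  | cons {i j : Q.V} (p : QP Q i j) (e : Q.E) (he : Q.s e = j) : QP Q i (Q.t e)

namespace QP

variable {Q : FQ}

/-- The length of a path. -/
def length : ∀ {i j : Q.V}, QP Q i j → ℕ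
  | _, _, .nil _ => 0
  | _, _, .cons p _ _ => length p + 1

/-- The first (rightmost) arrow of a path, if any. -/
def firstArrow : ∀ {i j : Q.V}, QP Q i j → Option Q.E
  | _, _, .nil _ => none
  | _, _, .cons p e _ => some ((firstArrow p).getD e)

/-- The last (leftmost) arrow of a path, if any. -/
def lastArrow : ∀ {i j : Q.V}, QP Q i j → Option Q.E
  | _, _, .nil _ => none
  | _, _, .cons _ e _ => some e

/-- Transport of a path along an equality of its starting vertices. -/
def castSrc {i i' j : Q.V} (h : i = i') (p : QP Q i j) : QP Q i' j := h ▸ p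

/-- Extend a path at its starting vertex by an arrow (`p ↦ p ∘ e`). -/
def preCons (e : Q.E) : ∀ {j : Q.V}, QP Q (Q.t e) j → QP Q (Q.s e) j
  | _, .nil _ => .cons (.nil (Q.s e)) e rfl
  | _, .cons p f hf => .cons (preCons e p) f hf

lemma length_castSrc {i i' j : Q.V} (h : i = i') (p : QP Q i j) :
    (castSrc h p).length = p.length := by subst h; rfl

lemma length_preCons (e : Q.E) : ∀ {j : Q.V} (p : QP Q (Q.t e) j),
    (preCons e p).length = p.length + 1
  | _, .nil _ => by simp [preCons, length]
  | _, .cons p f hf => by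
      show (QP.cons (preCons e p) f hf).length = _
      simp [length, length_preCons e p]

end QP

/-- With respect to a choice `asc` of an *associated* arrow terminating at each
non-source vertex, `IsAssoc Q asc a` says that the arrow `a` is the associated arrow
terminating at its target. -/
def IsAssoc (Q : FQ) (asc : ∀ i : Q.V, (∃ e, Q.t e = i) → Q.E) (a : Q.E) : Prop :=
  asc (Q.t a) ⟨a, rfl⟩ = a

/-- `(p, q)` is an *associated pair*: the paths `p` and `q` start at the same vertex,
and either one of them is trivial, or their first arrows differ, or their common first
arrow is not associated. -/
def AssocPair (Q : FQ) (asc : ∀ i : Q.V, (∃ e, Q.t e = i) → Q.E)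
    {i j j' : Q.V} (p : QP Q i j) (q : QP Q i j') : Prop :=
  ∀ a : Q.E, p.firstArrow = some a → q.firstArrow = some a → ¬ IsAssoc Q asc a

lemma assocPair_nil_left {Q : FQ} {asc : ∀ i : Q.V, (∃ e, Q.t e = i) → Q.E}
    {i j : Q.V} (q : QP Q i j) : AssocPair Q asc (QP.nil i) q := by
  intro a h
  simp [QP.firstArrow] at h

lemma assocPair_nil_right {Q : FQ} {asc : ∀ i : Q.V, (∃ e, Q.t e = i) → Q.E}
    {i j : Q.V} (p : QP Q i j) : AssocPair Q asc p (QP.nil i) := by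
  intro a _ h
  simp [QP.firstArrow] at h

/-- The index set `Λ^l_i` (for `i = x.i`): associated pairs `(p, q)` with
`t(p) = i` and `l(q) - l(p) = l`. -/
structure Lam (Q : FQ) (asc : ∀ i : Q.V, (∃ e, Q.t e = i) → Q.E) (l : ℤ) where
  a : Q.V              -- the common starting vertex of `p` and `q`
  i : Q.V              -- the terminating vertex of `p`
  b : Q.V              -- the terminating vertex of `q`
  p : QP Q a i
  q : QP Q a b
  ok : AssocPair Q asc p q
  deg : (q.length : ℤ) - (p.length : ℤ) = l

instance {Q : FQ} {asc : ∀ i : Q.V, (∃ e, Q.t e = i) → Q.E} {l : ℤ} :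
    DecidableEq (Lam Q asc l) := Classical.decEq _
/-- Generators of the path algebra `kQ`. -/
inductive AGen (Q : FQ)
  | vtx (i : Q.V)
  | ar (e : Q.E)

/-- The defining relations of the radical square zero algebra `A = kQ/J²`:
the trivial paths are orthogonal idempotents summing to the unit, arrows are unital
with respect to the trivial paths at their endpoints, and any product of two arrows
vanishes. -/
inductive ARel (k : Type) [Field k] (Q : FQ) :
    FreeAlgebra k (AGen Q) → FreeAlgebra k (AGen Q) → Prop
  | vtx_mul (i j : Q.V) :
      ARel k Q (FreeAlgebra.ι k (AGen.vtx i) * FreeAlgebra.ι k (AGen.vtx j))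
        (if i = j then FreeAlgebra.ι k (AGen.vtx i) else 0)
  | sum_vtx : ARel k Q (∑ i : Q.V, FreeAlgebra.ι k (AGen.vtx i)) 1
  | vtx_ar (e : Q.E) :
      ARel k Q (FreeAlgebra.ι k (AGen.vtx (Q.t e)) * FreeAlgebra.ι k (AGen.ar e))
        (FreeAlgebra.ι k (AGen.ar e))
  | ar_vtx (e : Q.E) :
      ARel k Q (FreeAlgebra.ι k (AGen.ar e) * FreeAlgebra.ι k (AGen.vtx (Q.s e)))
        (FreeAlgebra.ι k (AGen.ar e))
  | rad_sq (e f : Q.E) :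
      ARel k Q (FreeAlgebra.ι k (AGen.ar e) * FreeAlgebra.ι k (AGen.ar f)) 0

/-- The radical square zero algebra `A = kQ/J²` of the finite quiver `Q`. -/
abbrev AlgA (k : Type) [Field k] (Q : FQ) := RingQuot (ARel k Q)

/-- The image `e_i` in `A` of the trivial path at the vertex `i`. -/
def vtxA (k : Type) [Field k] (Q : FQ) (i : Q.V) : AlgA k Q :=
  RingQuot.mkAlgHom k (ARel k Q) (FreeAlgebra.ι k (AGen.vtx i))

/-- The image `α` in `A` of an arrow `α`. -/
def arA (k : Type) [Field k] (Q : FQ) (e : Q.E) : AlgA k Q :=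
  RingQuot.mkAlgHom k (ARel k Q) (FreeAlgebra.ι k (AGen.ar e))

lemma arA_mul_vtxA (k : Type) [Field k] (Q : FQ) (e : Q.E) :
    arA k Q e * vtxA k Q (Q.s e) = arA k Q e := by
  have h := RingQuot.mkAlgHom_rel k (ARel.ar_vtx (k := k) (Q := Q) e)
  simpa [vtxA, arA, map_mul] using h

/-- The indecomposable projective left `A`-module `P_i = A e_i`. -/
def Pmod (k : Type) [Field k] (Q : FQ) (i : Q.V) : Submodule (AlgA k Q) (AlgA k Q) :=
  Submodule.span (AlgA k Q) {vtxA k Q i}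

lemma vtxA_mem (k : Type) [Field k] (Q : FQ) (i : Q.V) : vtxA k Q i ∈ Pmod k Q i :=
  Submodule.mem_span_singleton_self _

lemma arA_mem (k : Type) [Field k] (Q : FQ) (e : Q.E) {i : Q.V} (he : Q.s e = i) :
    arA k Q e ∈ Pmod k Q i := by
  subst he
  rw [← arA_mul_vtxA k Q e]
  simpa [smul_eq_mul] using
    Submodule.smul_mem (Pmod k Q (Q.s e)) (arA k Q e) (vtxA_mem k Q (Q.s e))

/-- The `l`-th component `P^l = ⊕_{i ∈ Q₀} P_i^{(Λ^l_i)}` of the projective Leavitt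
complex. -/
abbrev PL (k : Type) [Field k] (Q : FQ) (asc : ∀ i : Q.V, (∃ e, Q.t e = i) → Q.E)
    (l : ℤ) : Type :=
  Π₀ x : Lam Q asc l, ↥(Pmod k Q x.i)

instance PL.instAddCommGroup (k : Type) [Field k] (Q : FQ)
    (asc : ∀ i : Q.V, (∃ e, Q.t e = i) → Q.E) (l : ℤ) :
    AddCommGroup (PL k Q asc l) :=
  @DFinsupp.addCommGroup (Lam Q asc l) (fun x => ↥(Pmod k Q x.i)) (fun _ => inferInstance)
/-- The basis element `e_i ζ_{(p,q)}` of `P^l`, for `x = (p, q) ∈ Λ^l_i`. -/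
def zE {k : Type} [Field k] {Q : FQ} {asc : ∀ i : Q.V, (∃ e, Q.t e = i) → Q.E}
    {l : ℤ} (x : Lam Q asc l) : PL k Q asc l :=
  DFinsupp.single x ⟨vtxA k Q x.i, vtxA_mem k Q x.i⟩

/-- The basis element `α ζ_{(p,q)}` of `P^l`, for `x = (p, q) ∈ Λ^l_i` and an arrow
`α` with `s(α) = i`. -/
def zA {k : Type} [Field k] {Q : FQ} {asc : ∀ i : Q.V, (∃ e, Q.t e = i) → Q.E}
    {l : ℤ} (x : Lam Q asc l) (e : Q.E) (he : Q.s e = x.i) : PL k Q asc l :=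
  DFinsupp.single x ⟨arA k Q e, arA_mem k Q e he⟩

/-- The family of `A`-linear maps `δ^l : P^l → P^{l+1}` is *the differential of the
projective Leavitt complex* when it satisfies the defining formulas:
`δ^l(α ζ_{(p,q)}) = 0`; `δ^l(e_i ζ_{(βp̂, q)}) = β ζ_{(p̂, q)}`; and
`δ^l(e_i ζ_{(e_i, q)}) = ∑_{β : t(β) = i} β ζ_{(e_{s(β)}, qβ)}`. -/
def IsLeavittDiff (k : Type) [Field k] (Q : FQ)
    (asc : ∀ i : Q.V, (∃ e, Q.t e = i) → Q.E)
    (δ : ∀ l : ℤ, PL k Q asc l →ₗ[AlgA k Q] PL k Q asc (l + 1)) : Prop :=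
  (∀ (l : ℤ) (x : Lam Q asc l) (e : Q.E) (he : Q.s e = x.i), δ l (zA x e he) = 0) ∧
  (∀ (l : ℤ) (a j b : Q.V) (p' : QP Q a j) (e : Q.E) (he : Q.s e = j) (q : QP Q a b)
      (ok : AssocPair Q asc (QP.cons p' e he) q)
      (dg : (q.length : ℤ) - ((QP.cons p' e he).length : ℤ) = l)
      (ok' : AssocPair Q asc p' q)
      (dg' : (q.length : ℤ) - (p'.length : ℤ) = l + 1),
      δ l (zE ⟨a, Q.t e, b, QP.cons p' e he, q, ok, dg⟩) =
        zA (⟨a, j, b, p', q, ok', dg'⟩ : Lam Q asc (l + 1)) e he) ∧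
  (∀ (l : ℤ) (a b : Q.V) (q : QP Q a b)
      (ok : AssocPair Q asc (QP.nil a) q)
      (dg : (q.length : ℤ) - ((QP.nil a).length : ℤ) = l),
      δ l (zE ⟨a, a, b, QP.nil a, q, ok, dg⟩) =
        ∑ e : {e : Q.E // Q.t e = a},
          zA (⟨Q.s e.1, Q.s e.1, b, QP.nil (Q.s e.1),
                QP.preCons e.1 (QP.castSrc e.2.symm q),
                assocPair_nil_left _,
                by
                  simp only [QP.length_preCons, QP.length_castSrc, QP.length] at *
                  push_cast
                  omega⟩ : Lam Q asc (l + 1)) e.1 rfl)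

/-!
`δ² = 0` because `δ` maps every `e_i ζ_x` into the span of the `α ζ_y`, which `δ` kills.

Conversely, every `α ζ_{(p, q)}` is a boundary. It is `δ(e_{t(α)} ζ_{(αp, q)})` unless
`(αp, q)` is not associated, which forces `p` trivial, `α` associated and `q = q'α`; then it
is `δ(e_{t(α)} ζ_{(e_{t(α)}, q')})` minus boundaries of the first kind. So it suffices to see
that a cycle `v` has no components `e_i ζ_x`. Each such coefficient is an arrow coefficient
of `δ v = 0`: for `x = (e_i, q)` that of `α ζ_{(e_{s(α)}, qα)}`, with `α` the arrow
associated at `i` (it exists as `Q` has no sources); for `x = (βp, q)` that of `β ζ_{(p, q)}`,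
once the coefficients of the first kind are known to vanish.
-/

namespace QP

variable {Q : FQ}

def toList : ∀ {i j : Q.V}, QP Q i j → List Q.E
  | _, _, .nil _ => []
  | _, _, .cons p e _ => toList p ++ [e]

lemma heq_of_toList_eq : ∀ {a j j' : Q.V} (p : QP Q a j) (p' : QP Q a j'),
    toList p = toList p' → j = j' ∧ HEq p p'
  | _, _, _, .nil _, .nil _, _ => ⟨rfl, .rfl⟩
  | _, _, _, .nil _, .cons _ _ _, h | _, _, _, .cons _ _ _, .nil _, h => by simp [toList] at h
  | _, _, _, .cons p e _, .cons p' e' _, h => by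
      simp only [toList] at h
      obtain ⟨hp, he⟩ := List.append_inj' h (by simp)
      obtain ⟨rfl, hp⟩ := heq_of_toList_eq p p' hp
      cases eq_of_heq hp
      obtain rfl : e = e' := List.singleton_injective he
      exact ⟨rfl, .rfl⟩

lemma toList_injective {a b : Q.V} : Function.Injective (toList : QP Q a b → List Q.E) :=
  fun p p' h => eq_of_heq (heq_of_toList_eq p p' h).2

lemma toList_preCons (e : Q.E) : ∀ {j : Q.V} (p : QP Q (Q.t e) j),
    toList (preCons e p) = e :: toList p
  | _, .nil _ => by simp [preCons, toList]
  | _, .cons p _ _ => by simp [preCons, toList, toList_preCons e p]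

lemma preCons_injective (e : Q.E) {j : Q.V} :
    Function.Injective (preCons e : QP Q (Q.t e) j → QP Q (Q.s e) j) := fun p p' h =>
  toList_injective (by simpa [toList_preCons] using congrArg toList h)

lemma firstArrow_preCons (e : Q.E) : ∀ {j : Q.V} (p : QP Q (Q.t e) j),
    firstArrow (preCons e p) = some e
  | _, .nil _ => by simp [preCons, firstArrow]
  | _, .cons p _ _ => by simp [preCons, firstArrow, firstArrow_preCons e p]

lemma exists_eq_preCons_of_firstArrow_eq (e : Q.E) {b : Q.V} (q : QP Q (Q.s e) b)
    (h : q.firstArrow = some e) : ∃ q' : QP Q (Q.t e) b, q = preCons e q' := by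
  induction q with
  | nil => simp [firstArrow] at h
  | cons p f hf ih =>
      cases p with
      | nil =>
          obtain rfl : f = e := by simpa [firstArrow] using h
          exact ⟨.nil _, rfl⟩
      | cons p g hg =>
          obtain ⟨q', hq'⟩ := ih (by simpa [firstArrow] using h)
          exact ⟨.cons q' f hf, by rw [hq']; rfl⟩

end QP

section Associated

variable {Q : FQ} {asc : ∀ i : Q.V, (∃ e, Q.t e = i) → Q.E}

lemma IsAssoc.eq_of_t_eq {e f : Q.E} (he : IsAssoc Q asc e) (hf : IsAssoc Q asc f)
    (hef : Q.t e = Q.t f) : e = f := by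
  unfold IsAssoc at he hf
  rw [← he, ← hf]
  congr

lemma exists_isAssoc (hQ : Q.NoSources)
    (hasc : ∀ (i : Q.V) (h : ∃ e, Q.t e = i), Q.t (asc i h) = i) (i : Q.V) :
    ∃ α, Q.t α = i ∧ IsAssoc Q asc α := by
  refine ⟨asc i (hQ i), hasc i (hQ i), ?_⟩
  have asc_congr (i' : Q.V) (h' : ∃ e, Q.t e = i') (hi' : i' = i) : asc i' h' = asc i (hQ i) := by
    subst hi'
    rfl
  exact asc_congr _ _ (hasc i (hQ i))

lemma AssocPair.of_cons {a j b : Q.V} {p : QP Q a j} {e : Q.E} {he : Q.s e = j}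
    {q : QP Q a b} (h : AssocPair Q asc (QP.cons p e he) q) : AssocPair Q asc p q :=
  fun f hp hq => h f (by simp [QP.firstArrow, hp]) hq

end Associated

/-- `kQ/J²` realised on coefficient vectors: evaluating `A` here is what makes the coefficient
functionals on `A` well defined. -/
@[ext]
structure RadSqModel (k : Type) [Field k] (Q : FQ) where
  vtx : Q.V → k
  arr : Q.E → k

namespace RadSqModel

variable {k : Type} [Field k] {Q : FQ}

instance : Add (RadSqModel k Q) := ⟨fun x y => ⟨x.vtx + y.vtx, x.arr + y.arr⟩⟩
instance : Zero (RadSqModel k Q) := ⟨⟨0, 0⟩⟩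
instance : Neg (RadSqModel k Q) := ⟨fun x => ⟨-x.vtx, -x.arr⟩⟩
instance : One (RadSqModel k Q) := ⟨⟨1, 0⟩⟩
instance : Mul (RadSqModel k Q) :=
  ⟨fun x y => ⟨x.vtx * y.vtx, fun e => x.vtx (Q.t e) * y.arr e + x.arr e * y.vtx (Q.s e)⟩⟩

@[simp] lemma add_vtx (x y : RadSqModel k Q) : (x + y).vtx = x.vtx + y.vtx := rfl
@[simp] lemma add_arr (x y : RadSqModel k Q) : (x + y).arr = x.arr + y.arr := rfl
@[simp] lemma zero_vtx : (0 : RadSqModel k Q).vtx = 0 := rfl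
@[simp] lemma zero_arr : (0 : RadSqModel k Q).arr = 0 := rfl
@[simp] lemma neg_vtx (x : RadSqModel k Q) : (-x).vtx = -x.vtx := rfl
@[simp] lemma neg_arr (x : RadSqModel k Q) : (-x).arr = -x.arr := rfl
@[simp] lemma one_vtx : (1 : RadSqModel k Q).vtx = 1 := rfl
@[simp] lemma one_arr : (1 : RadSqModel k Q).arr = 0 := rfl
@[simp] lemma mul_vtx (x y : RadSqModel k Q) : (x * y).vtx = x.vtx * y.vtx := rfl
@[simp] lemma mul_arr (x y : RadSqModel k Q) (e : Q.E) :
    (x * y).arr e = x.vtx (Q.t e) * y.arr e + x.arr e * y.vtx (Q.s e) := rfl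

instance : Ring (RadSqModel k Q) where
  add_assoc _ _ _ := by ext <;> simp [add_assoc]
  zero_add _ := by ext <;> simp
  add_zero _ := by ext <;> simp
  add_comm _ _ := by ext <;> simp [add_comm]
  neg_add_cancel _ := by ext <;> simp
  mul_assoc _ _ _ := by ext <;> simp <;> ring
  one_mul _ := by ext <;> simp
  mul_one _ := by ext <;> simp
  left_distrib _ _ _ := by ext <;> simp <;> ring
  right_distrib _ _ _ := by ext <;> simp <;> ring
  zero_mul _ := by ext <;> simp
  mul_zero _ := by ext <;> simp
  nsmul := nsmulRec
  zsmul := zsmulRec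

@[simp] lemma vtx_sum {ι : Type*} (s : Finset ι) (f : ι → RadSqModel k Q) :
    (∑ i ∈ s, f i).vtx = ∑ i ∈ s, (f i).vtx :=
  map_sum (⟨⟨vtx, rfl⟩, fun _ _ => rfl⟩ : RadSqModel k Q →+ (Q.V → k)) f s

@[simp] lemma arr_sum {ι : Type*} (s : Finset ι) (f : ι → RadSqModel k Q) :
    (∑ i ∈ s, f i).arr = ∑ i ∈ s, (f i).arr :=
  map_sum (⟨⟨arr, rfl⟩, fun _ _ => rfl⟩ : RadSqModel k Q →+ (Q.E → k)) f s

def const : k →+* RadSqModel k Q where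
  toFun c := ⟨fun _ => c, 0⟩
  map_one' := rfl
  map_mul' _ _ := by ext <;> simp
  map_zero' := rfl
  map_add' _ _ := by ext <;> simp

instance : Algebra k (RadSqModel k Q) :=
  RingHom.toAlgebra' const fun c x => by ext <;> simp [const] <;> ring

@[simp] lemma algebraMap_vtx (c : k) :
    (algebraMap k (RadSqModel k Q) c).vtx = fun _ => c := rfl
@[simp] lemma algebraMap_arr (c : k) : (algebraMap k (RadSqModel k Q) c).arr = 0 := rfl

@[simp] lemma smul_vtx (c : k) (x : RadSqModel k Q) : (c • x).vtx = c • x.vtx := by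
  ext; simp [Algebra.smul_def]
@[simp] lemma smul_arr (c : k) (x : RadSqModel k Q) : (c • x).arr = c • x.arr := by
  ext; simp [Algebra.smul_def]

def vtxCoeff (i : Q.V) : RadSqModel k Q →ₗ[k] k where
  toFun x := x.vtx i
  map_add' _ _ := rfl
  map_smul' _ _ := by simp

def arrCoeff (e : Q.E) : RadSqModel k Q →ₗ[k] k where
  toFun x := x.arr e
  map_add' _ _ := rfl
  map_smul' _ _ := by simp

def gen : AGen Q → RadSqModel k Q
  | .vtx i => ⟨Pi.single i 1, 0⟩
  | .ar e => ⟨0, Pi.single e 1⟩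

lemma lift_gen_rel ⦃x y : FreeAlgebra k (AGen Q)⦄ (h : ARel k Q x y) :
    FreeAlgebra.lift k (gen (k := k)) x = FreeAlgebra.lift k gen y := by
  cases h with
  | vtx_mul i j =>
      by_cases hij : i = j <;> ext <;> simp [gen, hij, Pi.single_apply]
      rintro rfl rfl
      exact hij rfl
  | _ => ext <;> simp [gen, Pi.single_apply] <;> grind

end RadSqModel

section Relations

variable (k : Type) [Field k] (Q : FQ)

lemma vtxA_mul_vtxA (i j : Q.V) :
    vtxA k Q i * vtxA k Q j = if i = j then vtxA k Q i else 0 := by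
  simpa [vtxA, apply_ite] using RingQuot.mkAlgHom_rel k (ARel.vtx_mul (k := k) (Q := Q) i j)

lemma sum_vtxA : ∑ i : Q.V, vtxA k Q i = 1 := by
  simpa [vtxA] using RingQuot.mkAlgHom_rel k (ARel.sum_vtx (k := k) (Q := Q))

lemma vtxA_mul_arA (i : Q.V) (e : Q.E) :
    vtxA k Q i * arA k Q e = if i = Q.t e then arA k Q e else 0 := by
  have h : vtxA k Q (Q.t e) * arA k Q e = arA k Q e := by
    simpa [vtxA, arA] using RingQuot.mkAlgHom_rel k (ARel.vtx_ar (k := k) (Q := Q) e)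
  split_ifs with hi
  · rw [hi, h]
  · rw [← h, ← mul_assoc, vtxA_mul_vtxA, if_neg hi, zero_mul]

lemma arA_mul_vtxA_eq_ite (e : Q.E) (i : Q.V) :
    arA k Q e * vtxA k Q i = if Q.s e = i then arA k Q e else 0 := by
  split_ifs with hi
  · rw [← hi, arA_mul_vtxA]
  · rw [← arA_mul_vtxA, mul_assoc, vtxA_mul_vtxA, if_neg hi, mul_zero]

lemma arA_mul_arA (e f : Q.E) : arA k Q e * arA k Q f = 0 := by
  simpa [arA] using RingQuot.mkAlgHom_rel k (ARel.rad_sq (k := k) (Q := Q) e f)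

end Relations

namespace AlgA

variable (k : Type) [Field k] (Q : FQ)

def toModel : AlgA k Q →ₐ[k] RadSqModel k Q :=
  RingQuot.liftAlgHom k ⟨FreeAlgebra.lift k RadSqModel.gen, RadSqModel.lift_gen_rel⟩

def vtxCoeff (i : Q.V) : AlgA k Q →ₗ[k] k :=
  (RadSqModel.vtxCoeff i).comp (toModel k Q).toLinearMap

def arrCoeff (e : Q.E) : AlgA k Q →ₗ[k] k :=
  (RadSqModel.arrCoeff e).comp (toModel k Q).toLinearMap

lemma toModel_vtxA (i : Q.V) : toModel k Q (vtxA k Q i) = ⟨Pi.single i 1, 0⟩ := by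
  simp [toModel, vtxA, RadSqModel.gen]

lemma toModel_arA (e : Q.E) : toModel k Q (arA k Q e) = ⟨0, Pi.single e 1⟩ := by
  simp [toModel, arA, RadSqModel.gen]

@[simp] lemma vtxCoeff_vtxA (i j : Q.V) :
    vtxCoeff k Q i (vtxA k Q j) = if i = j then 1 else 0 := by
  simp [vtxCoeff, toModel_vtxA, RadSqModel.vtxCoeff, Pi.single_apply]

@[simp] lemma vtxCoeff_arA (i : Q.V) (e : Q.E) : vtxCoeff k Q i (arA k Q e) = 0 := by
  simp [vtxCoeff, toModel_arA, RadSqModel.vtxCoeff]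

@[simp] lemma arrCoeff_arA (e f : Q.E) :
    arrCoeff k Q e (arA k Q f) = if e = f then 1 else 0 := by
  simp [arrCoeff, toModel_arA, RadSqModel.arrCoeff, Pi.single_apply]

def gen : Q.V ⊕ Q.E → AlgA k Q := Sum.elim (vtxA k Q) (arA k Q)

lemma gen_mul_gen_mem_span (x y : Q.V ⊕ Q.E) :
    gen k Q x * gen k Q y ∈ Submodule.span k (Set.range (gen k Q)) := by
  have mem (z) : gen k Q z ∈ Submodule.span k (Set.range (gen k Q)) :=
    Submodule.subset_span ⟨z, rfl⟩
  rcases x with i | e <;> rcases y with j | f <;>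
    simp only [gen, Sum.elim_inl, Sum.elim_inr, vtxA_mul_vtxA, vtxA_mul_arA, arA_mul_vtxA_eq_ite,
      arA_mul_arA] <;>
    (try split_ifs) <;>
    first
      | exact Submodule.zero_mem _
      | exact mem (.inl i)
      | exact mem (.inr f)
      | exact mem (.inr e)

lemma span_range_gen : Submodule.span k (Set.range (gen k Q)) = ⊤ := by
  set S := Submodule.span k (Set.range (gen k Q))
  have mul_le : S * S ≤ S := by
    rw [Submodule.span_mul_span, Submodule.span_le]
    rintro _ ⟨_, ⟨x, rfl⟩, _, ⟨y, rfl⟩, rfl⟩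
    exact gen_mul_gen_mem_span k Q x y
  rw [Submodule.eq_top_iff']
  intro a
  obtain ⟨a, rfl⟩ := RingQuot.mkAlgHom_surjective k (ARel k Q) a
  induction a using FreeAlgebra.induction with
  | grade0 c =>
      rw [AlgHom.commutes, Algebra.algebraMap_eq_smul_one, ← sum_vtxA]
      exact S.smul_mem c (S.sum_mem fun i _ => Submodule.subset_span ⟨.inl i, rfl⟩)
  | grade1 g =>
      cases g with
      | vtx i => exact Submodule.subset_span ⟨.inl i, rfl⟩
      | ar e => exact Submodule.subset_span ⟨.inr e, rfl⟩
  | mul a b ha hb => rw [map_mul]; exact mul_le (Submodule.mul_mem_mul ha hb)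
  | add a b ha hb => rw [map_add]; exact S.add_mem ha hb

lemma exists_eq_smul_vtxA_add_sum_smul_arA {i : Q.V} {m : AlgA k Q} (hm : m ∈ Pmod k Q i) :
    ∃ μ : {e : Q.E // Q.s e = i} → k,
      m = vtxCoeff k Q i m • vtxA k Q i + ∑ e, μ e • arA k Q e.1 := by
  obtain ⟨a, rfl⟩ := Submodule.mem_span_singleton.mp hm
  obtain ⟨c, rfl⟩ := (Submodule.mem_span_range_iff_exists_fun k).mp
    (span_range_gen k Q ▸ Submodule.mem_top : a ∈ Submodule.span k (Set.range (gen k Q)))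
  have h : (∑ x, c x • gen k Q x) • vtxA k Q i =
      c (.inl i) • vtxA k Q i + ∑ e : {e : Q.E // Q.s e = i}, c (.inr e.1) • arA k Q e.1 := by
    rw [smul_eq_mul, Fintype.sum_sum_type, add_mul, Finset.sum_mul, Finset.sum_mul]
    simp only [gen, Sum.elim_inl, Sum.elim_inr, smul_mul_assoc, vtxA_mul_vtxA, arA_mul_vtxA_eq_ite,
      smul_ite, smul_zero, Finset.sum_ite_eq', Finset.mem_univ, if_true]
    rw [← Finset.sum_filter, Finset.sum_subtype _ (p := fun e => Q.s e = i) (by simp)]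
  refine ⟨fun e => c (.inr e.1), ?_⟩
  rw [h]
  congr 2
  simp [map_sum]

end AlgA

namespace PL

variable {k : Type} [Field k] {Q : FQ} {asc : ∀ i : Q.V, (∃ e, Q.t e = i) → Q.E}

/-- The coefficient of `e_i ζ_x`. -/
def vtxCoeff {l : ℤ} (x : Lam Q asc l) : PL k Q asc l →ₗ[k] k :=
  (AlgA.vtxCoeff k Q x.i).comp
    (((Pmod k Q x.i).subtype.restrictScalars k).comp (DFinsupp.lapply (R := k) x))

/-- The coefficient of `α ζ_x`. -/
def arrCoeff {l : ℤ} (x : Lam Q asc l) (α : Q.E) : PL k Q asc l →ₗ[k] k :=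
  (AlgA.arrCoeff k Q α).comp
    (((Pmod k Q x.i).subtype.restrictScalars k).comp (DFinsupp.lapply (R := k) x))

lemma vtxCoeff_apply {l : ℤ} (x : Lam Q asc l) (w : PL k Q asc l) :
    vtxCoeff x w = AlgA.vtxCoeff k Q x.i (w x) := rfl

lemma arrCoeff_zA {l : ℤ} (z x : Lam Q asc l) (e f : Q.E) (hf : Q.s f = x.i) :
    arrCoeff z e (zA (k := k) x f hf) = if x = z ∧ e = f then 1 else 0 := by
  by_cases hx : x = z
  · subst hx
    simp [arrCoeff, zA]
  · simp [arrCoeff, zA, DFinsupp.single_eq_of_ne (Ne.symm hx), hx]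

lemma single_eq_smul_zE_add_sum_smul_zA {l : ℤ} (x : Lam Q asc l) (m : Pmod k Q x.i) :
    ∃ μ : {e : Q.E // Q.s e = x.i} → k,
      DFinsupp.single x m = AlgA.vtxCoeff k Q x.i m • zE x + ∑ e, μ e • zA x e.1 e.2 := by
  obtain ⟨μ, hμ⟩ := AlgA.exists_eq_smul_vtxA_add_sum_smul_arA k Q m.2
  refine ⟨μ, ?_⟩
  have hm : m = AlgA.vtxCoeff k Q x.i m • ⟨vtxA k Q x.i, vtxA_mem k Q x.i⟩ +
      ∑ e, μ e • ⟨arA k Q e.1, arA_mem k Q e.1 e.2⟩ := Subtype.ext (by simpa using hμ)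
  conv_lhs => rw [← DFinsupp.lsingle_apply (R := k), hm, map_add, map_smul, map_sum]
  simp only [map_smul, DFinsupp.lsingle_apply, zE, zA]

end PL

namespace IsLeavittDiff

open PL

variable {k : Type} [Field k] {Q : FQ} {asc : ∀ i : Q.V, (∃ e, Q.t e = i) → Q.E}
  {δ : ∀ l : ℤ, PL k Q asc l →ₗ[AlgA k Q] PL k Q asc (l + 1)}

lemma map_zA (hδ : IsLeavittDiff k Q asc δ) {l : ℤ} (x : Lam Q asc l) (e : Q.E)
    (he : Q.s e = x.i) : δ l (zA x e he) = 0 :=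
  hδ.1 l x e he

lemma map_zE_cons (hδ : IsLeavittDiff k Q asc δ) {l : ℤ} {a j b : Q.V} (p : QP Q a j)
    (e : Q.E) (he : Q.s e = j) (q : QP Q a b) (ok : AssocPair Q asc (QP.cons p e he) q)
    (dg : (q.length : ℤ) - ((QP.cons p e he).length : ℤ) = l) :
    δ l (zE ⟨a, Q.t e, b, .cons p e he, q, ok, dg⟩) =
      zA (⟨a, j, b, p, q, ok.of_cons, by simp [QP.length] at dg; omega⟩ : Lam Q asc (l + 1))
        e he :=
  hδ.2.1 l a j b p e he q ok dg _ _

lemma map_zE_nil (hδ : IsLeavittDiff k Q asc δ) {l : ℤ} {a b : Q.V} (q : QP Q a b)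
    (ok : AssocPair Q asc (QP.nil a) q) (dg : (q.length : ℤ) - ((QP.nil a).length : ℤ) = l) :
    δ l (zE ⟨a, a, b, .nil a, q, ok, dg⟩) =
      ∑ e : {e : Q.E // Q.t e = a},
        zA (⟨Q.s e.1, Q.s e.1, b, .nil _, .preCons e.1 (.castSrc e.2.symm q),
          assocPair_nil_left _, by
            simp [QP.length, QP.length_preCons, QP.length_castSrc] at dg ⊢; omega⟩ :
          Lam Q asc (l + 1)) e.1 rfl :=
  hδ.2.2 l a b q ok dg

lemma map_single (hδ : IsLeavittDiff k Q asc δ) {l : ℤ} (x : Lam Q asc l) (m : Pmod k Q x.i) :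
    δ l (DFinsupp.single x m) = AlgA.vtxCoeff k Q x.i m • δ l (zE x) := by
  obtain ⟨μ, hμ⟩ := single_eq_smul_zE_add_sum_smul_zA x m
  simp [hμ, LinearMap.map_smul_of_tower, hδ.map_zA]

open Classical in
lemma map_eq_sum (hδ : IsLeavittDiff k Q asc δ) {l : ℤ} (v : PL k Q asc l) :
    δ l v = ∑ x ∈ v.support, vtxCoeff x v • δ l (zE x) := by
  conv_lhs => rw [← DFinsupp.sum_single (f := v)]
  rw [DFinsupp.sum, map_sum]
  exact Finset.sum_congr rfl fun x _ => hδ.map_single x (v x)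

lemma map_map_zE (hδ : IsLeavittDiff k Q asc δ) {l : ℤ} (x : Lam Q asc l) :
    δ (l + 1) (δ l (zE x)) = 0 := by
  obtain ⟨a, i, b, p, q, ok, dg⟩ := x
  cases p with
  | cons p e he => rw [hδ.map_zE_cons]; exact hδ.map_zA _ e he
  | nil => simp [hδ.map_zE_nil, hδ.map_zA]

lemma map_map (hδ : IsLeavittDiff k Q asc δ) {l : ℤ} (v : PL k Q asc l) :
    δ (l + 1) (δ l v) = 0 := by
  classical
  simp [hδ.map_eq_sum v, LinearMap.map_smul_of_tower, hδ.map_map_zE]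

lemma zA_mem_range_of_assocPair_cons (hδ : IsLeavittDiff k Q asc δ) {l : ℤ} {a j b : Q.V}
    (p : QP Q a j) (e : Q.E) (he : Q.s e = j) (q : QP Q a b) (ok : AssocPair Q asc p q)
    (dg : (q.length : ℤ) - (p.length : ℤ) = l + 1) (ok' : AssocPair Q asc (QP.cons p e he) q) :
    zA (⟨a, j, b, p, q, ok, dg⟩ : Lam Q asc (l + 1)) e he ∈ LinearMap.range (δ l) :=
  ⟨zE ⟨a, Q.t e, b, .cons p e he, q, ok', by simp [QP.length]; omega⟩,
    hδ.map_zE_cons p e he q ok' _⟩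

/-- All terms of `δ(e_{t(e)} ζ_{(e_{t(e)}, q)})` but this one are covered by
`zA_mem_range_of_assocPair_cons`, their arrows not being associated. -/
lemma zA_preCons_mem_range (hδ : IsLeavittDiff k Q asc δ) {l : ℤ} {b : Q.V} (e : Q.E)
    (he : IsAssoc Q asc e) (q : QP Q (Q.t e) b)
    (dg : ((QP.preCons e q).length : ℤ) - ((QP.nil (Q.s e)).length : ℤ) = l + 1) :
    zA (⟨Q.s e, Q.s e, b, .nil _, .preCons e q, assocPair_nil_left _, dg⟩ : Lam Q asc (l + 1))
      e rfl ∈ LinearMap.range (δ l) := by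
  have dg' : (q.length : ℤ) - ((QP.nil (Q.t e)).length : ℤ) = l := by
    simp [QP.length, QP.length_preCons] at dg ⊢; omega
  have hsum :=
    LinearMap.mem_range_self (δ l) (zE ⟨_, _, b, .nil _, q, assocPair_nil_left _, dg'⟩)
  rw [hδ.map_zE_nil, ← Finset.add_sum_erase _ _ (Finset.mem_univ ⟨e, rfl⟩)] at hsum
  refine (Submodule.add_mem_iff_left _ (Submodule.sum_mem _ fun f hf => ?_)).mp hsum
  refine hδ.zA_mem_range_of_assocPair_cons _ _ _ _ _ _ fun g hg _ hf' => ?_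
  obtain rfl : f.1 = g := by simpa [QP.firstArrow] using hg
  exact Finset.ne_of_mem_erase hf (Subtype.ext (hf'.eq_of_t_eq he f.2))

lemma zA_mem_range (hδ : IsLeavittDiff k Q asc δ) {l : ℤ} (z : Lam Q asc (l + 1)) (e : Q.E)
    (he : Q.s e = z.i) : zA z e he ∈ LinearMap.range (δ l) := by
  obtain ⟨a, i, b, p, q, ok, dg⟩ := z
  by_cases ok' : AssocPair Q asc (QP.cons p e he) q
  · exact hδ.zA_mem_range_of_assocPair_cons p e he q ok dg ok'
  simp only [AssocPair, not_forall, not_not] at ok'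
  obtain ⟨f, hpf, hqf, hf⟩ := ok'
  cases p with
  | cons p g hg => exact absurd hf (ok f (by simpa [QP.firstArrow] using hpf) hqf)
  | nil =>
      obtain rfl : e = f := by simpa [QP.firstArrow] using hpf
      obtain rfl : Q.s e = a := he
      obtain ⟨q, rfl⟩ := QP.exists_eq_preCons_of_firstArrow_eq e q hqf
      exact hδ.zA_preCons_mem_range e hf q dg

lemma single_mem_range (hδ : IsLeavittDiff k Q asc δ) {l : ℤ} (x : Lam Q asc (l + 1))
    (m : Pmod k Q x.i) (hm : AlgA.vtxCoeff k Q x.i m = 0) :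
    DFinsupp.single x m ∈ LinearMap.range (δ l) := by
  obtain ⟨μ, hμ⟩ := single_eq_smul_zE_add_sum_smul_zA x m
  rw [hμ, hm]
  exact add_mem (zero_smul k (zE (k := k) x) ▸ zero_mem _) <| Submodule.sum_mem _ fun e _ =>
    Submodule.smul_of_tower_mem _ _ (hδ.zA_mem_range x e.1 e.2)

lemma mem_range_of_forall_vtxCoeff_eq_zero (hδ : IsLeavittDiff k Q asc δ) {l : ℤ}
    (w : PL k Q asc (l + 1)) (hw : ∀ x, vtxCoeff x w = 0) : w ∈ LinearMap.range (δ l) := by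
  classical
  rw [← DFinsupp.sum_single (f := w)]
  exact Submodule.sum_mem _ fun x _ => hδ.single_mem_range x (w x) (hw x)

lemma arrCoeff_map_eq_vtxCoeff (hδ : IsLeavittDiff k Q asc δ) {l : ℤ}
    (z : Lam Q asc (l + 1)) (e : Q.E) (x₀ : Lam Q asc l) (v : PL k Q asc l)
    (h₀ : arrCoeff z e (δ l (zE x₀)) = 1)
    (h : ∀ x ≠ x₀, vtxCoeff x v = 0 ∨ arrCoeff z e (δ l (zE x)) = 0) :
    arrCoeff z e (δ l v) = vtxCoeff x₀ v := by
  classical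
  rw [hδ.map_eq_sum, map_sum, Finset.sum_eq_single x₀]
  · rw [map_smul, h₀, smul_eq_mul, mul_one]
  · intro x _ hx
    rcases h x hx with h | h <;> simp [h]
  · intro hx
    rw [vtxCoeff_apply x₀, DFinsupp.notMem_support_iff.mp hx]
    simp

lemma vtxCoeff_nil_eq_zero (hδ : IsLeavittDiff k Q asc δ) {l : ℤ} {v : PL k Q asc l}
    (hv : δ l v = 0) {b : Q.V} (α : Q.E) (hα : IsAssoc Q asc α) (q : QP Q (Q.t α) b)
    (ok : AssocPair Q asc (QP.nil _) q)
    (dg : (q.length : ℤ) - ((QP.nil (Q.t α)).length : ℤ) = l) :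
    vtxCoeff ⟨_, _, b, .nil _, q, ok, dg⟩ v = 0 := by
  let z : Lam Q asc (l + 1) := ⟨Q.s α, Q.s α, b, .nil _, .preCons α q, assocPair_nil_left _,
    by simp [QP.length, QP.length_preCons] at dg ⊢; omega⟩
  rw [← hδ.arrCoeff_map_eq_vtxCoeff z α _ v ?_ ?_, hv, map_zero]
  · rw [hδ.map_zE_nil, map_sum, Finset.sum_eq_single ⟨α, rfl⟩]
    · simp [z, arrCoeff_zA, QP.castSrc]
    · rintro β - hβ
      rw [arrCoeff_zA, if_neg]
      rintro ⟨-, he⟩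
      exact hβ (Subtype.ext he.symm)
    · simp
  rintro ⟨a', i', b', p', q', ok', dg'⟩ hx
  right
  cases p' with
  | cons p' f hf =>
      rw [hδ.map_zE_cons, arrCoeff_zA, if_neg]
      rintro ⟨hz, rfl⟩
      simp only [z, Lam.mk.injEq] at hz
      obtain ⟨rfl, rfl, rfl, hp, hq⟩ := hz
      cases hp
      cases hq
      exact ok' α (by simp [QP.firstArrow]) (QP.firstArrow_preCons α q) hα
  | nil =>
      rw [hδ.map_zE_nil, map_sum]
      refine Finset.sum_eq_zero fun ⟨β, hβ⟩ _ => ?_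
      rw [arrCoeff_zA, if_neg]
      rintro ⟨hz, rfl⟩
      subst hβ
      simp only [z, Lam.mk.injEq] at hz
      obtain ⟨-, -, rfl, -, hq⟩ := hz
      cases QP.preCons_injective α (eq_of_heq hq)
      exact hx rfl

lemma vtxCoeff_cons_eq_zero (hδ : IsLeavittDiff k Q asc δ) {l : ℤ} {v : PL k Q asc l}
    (hv : δ l v = 0)
    (hnil : ∀ (a b : Q.V) (q : QP Q a b) (ok : AssocPair Q asc (QP.nil a) q)
      (dg : (q.length : ℤ) - ((QP.nil a).length : ℤ) = l),
      vtxCoeff ⟨a, a, b, .nil a, q, ok, dg⟩ v = 0)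
    {a j b : Q.V} (p : QP Q a j) (e : Q.E) (he : Q.s e = j) (q : QP Q a b)
    (ok : AssocPair Q asc (QP.cons p e he) q)
    (dg : (q.length : ℤ) - ((QP.cons p e he).length : ℤ) = l) :
    vtxCoeff ⟨a, Q.t e, b, .cons p e he, q, ok, dg⟩ v = 0 := by
  let z : Lam Q asc (l + 1) := ⟨a, j, b, p, q, ok.of_cons, by simp [QP.length] at dg; omega⟩
  rw [← hδ.arrCoeff_map_eq_vtxCoeff z e _ v ?_ ?_, hv, map_zero]
  · simp [hδ.map_zE_cons, z, arrCoeff_zA]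
  rintro ⟨a', i', b', p', q', ok', dg'⟩ hx
  cases p' with
  | nil => exact .inl (hnil _ _ _ _ _)
  | cons p' f hf =>
      right
      rw [hδ.map_zE_cons, arrCoeff_zA, if_neg]
      rintro ⟨hz, rfl⟩
      simp only [z, Lam.mk.injEq] at hz
      obtain ⟨rfl, rfl, rfl, hp, hq⟩ := hz
      cases hp
      cases hq
      exact hx rfl

lemma vtxCoeff_eq_zero_of_map_eq_zero (hQ : Q.NoSources)
    (hasc : ∀ (i : Q.V) (h : ∃ e, Q.t e = i), Q.t (asc i h) = i)
    (hδ : IsLeavittDiff k Q asc δ) {l : ℤ} {v : PL k Q asc l} (hv : δ l v = 0)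
    (x : Lam Q asc l) : vtxCoeff x v = 0 := by
  have hnil (a b : Q.V) (q : QP Q a b) (ok : AssocPair Q asc (QP.nil a) q)
      (dg : (q.length : ℤ) - ((QP.nil a).length : ℤ) = l) :
      vtxCoeff ⟨a, a, b, .nil a, q, ok, dg⟩ v = 0 := by
    obtain ⟨α, rfl, hα⟩ := exists_isAssoc hQ hasc a
    exact hδ.vtxCoeff_nil_eq_zero hv α hα q ok dg
  obtain ⟨a, i, b, p, q, ok, dg⟩ := x
  cases p with
  | nil => exact hnil a b q ok dg
  | cons p e he => exact hδ.vtxCoeff_cons_eq_zero hv hnil p e he q ok dg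

end IsLeavittDiff

/-- **Acyclicity of the projective Leavitt complex (Proposition 2.7).**  Let `Q` be a
finite quiver without sources and `δ` the differential of the projective Leavitt
complex `P•` of `Q`.  Then `P•` is acyclic: `Im δ^l = Ker δ^{l+1}` for every `l ∈ ℤ`. -/
theorem projective_leavitt_complex_acyclic (k : Type) [Field k]
    (Q : FQ) (hQ : Q.NoSources)
    (asc : ∀ i : Q.V, (∃ e, Q.t e = i) → Q.E)
    (hasc : ∀ (i : Q.V) (h : ∃ e, Q.t e = i), Q.t (asc i h) = i)
    (δ : ∀ l : ℤ, PL k Q asc l →ₗ[AlgA k Q] PL k Q asc (l + 1))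
    (hδ : IsLeavittDiff k Q asc δ) :
    ∀ l : ℤ, LinearMap.range (δ l) = LinearMap.ker (δ (l + 1)) := by
  intro l
  refine le_antisymm ?_ fun v hv => ?_
  · rintro _ ⟨u, rfl⟩
    exact hδ.map_map u
  · exact hδ.mem_range_of_forall_vtxCoeff_eq_zero v
      (hδ.vtxCoeff_eq_zero_of_map_eq_zero hQ hasc hv)
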